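/- arXiv:2005.14029 — 3 statements merged into one kernel-verified Lean document; each statement's English description precedes it below -/
import Mathlib

section
/- Under the hypotheses of the error-dynamics lemma (T∘A − L∘T = H∘C, G = T∘B), if additionally the semigroup generated by L is exponentially stable, i.e. every solution of e' = L e satisfies ‖e(t)‖ ≤ F e^{-σ t}‖e(0)‖ with F, σ > 0, then the observer w converges regionally: ‖T z(t) − w(t)‖ → 0 as t → ∞. -/
open Filter Real Topology

section ObserverError

variable {Z U W Y : Type*} [NormedAddCommGroup Z] [NormedSpace ℝ Z]
  [NormedAddCommGroup U] [NormedSpace ℝ U] [NormedAddCommGroup W] [NormedSpace ℝ W]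
  [NormedAddCommGroup Y] [NormedSpace ℝ Y]

-- `G = T B` cancels the input and `T A - L T = H C` cancels the output injection.
theorem hasDerivAt_observer_error {A : Z →L[ℝ] Z} {B : U →L[ℝ] Z} {T : Z →L[ℝ] W}
    {L : W →L[ℝ] W} {C : Z →L[ℝ] Y} {H : Y →L[ℝ] W} {G : U →L[ℝ] W}
    (hinter : ∀ v, T (A v) - L (T v) = H (C v)) (hG : ∀ v, G v = T (B v))
    {u : ℝ → U} {z : ℝ → Z} {w : ℝ → W} {t : ℝ}
    (hz : HasDerivAt z (A (z t) + B (u t)) t)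
    (hw : HasDerivAt w (L (w t) + G (u t) + H (C (z t))) t) :
    HasDerivAt (fun s => T (z s) - w s) (L (T (z t) - w t)) t := by
  refine ((T.hasFDerivAt.comp_hasDerivAt t hz).sub hw).congr_deriv ?_
  rw [hG, ← hinter]
  simp only [map_add, map_sub]
  abel

end ObserverError

theorem tendsto_norm_zero_of_le_exp_decay {W : Type*} [SeminormedAddGroup W] {f : ℝ → W}
    {F σ c : ℝ} (hσ : 0 < σ) (hf : ∀ᶠ t in atTop, ‖f t‖ ≤ F * exp (-σ * t) * c) :
    Tendsto (fun t => ‖f t‖) atTop (𝓝 0) := by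
  have hexp : Tendsto (fun t => exp (-σ * t)) atTop (𝓝 0) :=
    tendsto_exp_atBot.comp <| tendsto_id.const_mul_atTop_of_neg (neg_neg_of_pos hσ)
  have hbound : Tendsto (fun t => F * exp (-σ * t) * c) atTop (𝓝 0) := by
    simpa using (hexp.const_mul F).mul_const c
  exact squeeze_zero' (.of_forall fun _ => norm_nonneg _) hf hbound

theorem stmt_4_general {Z U W : Type*} [NormedAddCommGroup Z] [NormedSpace ℝ Z]
    [NormedAddCommGroup U] [NormedSpace ℝ U]
    [NormedAddCommGroup W] [NormedSpace ℝ W] (q : ℕ)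
    (A : Z →L[ℝ] Z) (B : U →L[ℝ] Z) (T : Z →L[ℝ] W) (L : W →L[ℝ] W)
    (C : Z →L[ℝ] (Fin q → ℝ)) (H : (Fin q → ℝ) →L[ℝ] W) (G : U →L[ℝ] W)
    (hinter : ∀ v : Z, T (A v) - L (T v) = H (C v))
    (hG : ∀ v : U, G v = T (B v))
    (F σ : ℝ) (hσ : 0 < σ)
    (hstab : ∀ e : ℝ → W, (∀ t : ℝ, HasDerivAt e (L (e t)) t) →
      ∀ t : ℝ, 0 ≤ t → ‖e t‖ ≤ F * Real.exp (-σ * t) * ‖e 0‖)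
    (u : ℝ → U) (z : ℝ → Z) (w : ℝ → W)
    (hz : ∀ t : ℝ, HasDerivAt z (A (z t) + B (u t)) t)
    (hw : ∀ t : ℝ, HasDerivAt w (L (w t) + G (u t) + H (C (z t))) t) :
    Tendsto (fun t => ‖T (z t) - w t‖) atTop (nhds 0) := by
  have herror := hstab _ fun t => hasDerivAt_observer_error hinter hG (hz t) (hw t)
  exact tendsto_norm_zero_of_le_exp_decay hσ <|
    (eventually_ge_atTop 0).mono fun t ht => herror t ht

theorem stmt_4 {Z U W : Type*} [NormedAddCommGroup Z] [NormedSpace ℝ Z]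
    [NormedAddCommGroup U] [NormedSpace ℝ U]
    [NormedAddCommGroup W] [NormedSpace ℝ W] (q : ℕ)
    (A : Z →L[ℝ] Z) (B : U →L[ℝ] Z) (T : Z →L[ℝ] W) (L : W →L[ℝ] W)
    (C : Z →L[ℝ] (Fin q → ℝ)) (H : (Fin q → ℝ) →L[ℝ] W) (G : U →L[ℝ] W)
    (hinter : ∀ v : Z, T (A v) - L (T v) = H (C v))
    (hG : ∀ v : U, G v = T (B v))
    (F σ : ℝ) (hF : 0 < F) (hσ : 0 < σ)
    (hstab : ∀ e : ℝ → W, (∀ t : ℝ, HasDerivAt e (L (e t)) t) →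
      ∀ t : ℝ, 0 ≤ t → ‖e t‖ ≤ F * Real.exp (-σ * t) * ‖e 0‖)
    (u : ℝ → U) (z : ℝ → Z) (w : ℝ → W)
    (hz : ∀ t : ℝ, HasDerivAt z (A (z t) + B (u t)) t)
    (hw : ∀ t : ℝ, HasDerivAt w (L (w t) + G (u t) + H (C (z t))) t) :
    Tendsto (fun t => ‖T (z t) - w t‖) atTop (nhds 0) :=
  stmt_4_general q A B T L C H G hinter hG F σ hσ hstab u z w hz hw
end

section
/- Combining the two conditions of Theorem 3.8: if M∘C + N∘T = id_Z, T∘A − L∘T = H∘C, G = T∘B, L generates exponentially stable dynamics (solutions of e' = L e decay exponentially), z solves z' = A z + B u, and w solves w' = L w + G u + H C z, then ẑ(t) := M(C z(t)) + N(w(t)) satisfies ‖ẑ(t) − z(t)‖ → 0 as t → ∞. -/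
open Filter Real Topology

/- The observation error `e = w - T z` obeys the autonomous equation `e' = L e`, because the
intertwining identity `T A - L T = H C` cancels the measured term and `G = T B` cancels the input.
Since `ẑ - z = N e` by `M C + N T = id`, exponential stability of `L` forces `ẑ - z → 0`. -/

theorem hasDerivAt_sub_apply_of_intertwining {Z W : Type*}
    [NormedAddCommGroup Z] [NormedSpace ℝ Z] [NormedAddCommGroup W] [NormedSpace ℝ W]
    (A : Z →L[ℝ] Z) (L : W →L[ℝ] W) (T : Z →L[ℝ] W)
    {z : ℝ → Z} {w : ℝ → W} {b : Z} {t : ℝ} (hz : HasDerivAt z (A (z t) + b) t)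
    (hw : HasDerivAt w (L (w t) + T b + (T (A (z t)) - L (T (z t)))) t) :
    HasDerivAt (fun s => w s - T (z s)) (L (w t - T (z t))) t := by
  refine (hw.sub (T.hasFDerivAt.comp_hasDerivAt t hz)).congr_deriv ?_
  simp only [map_add, map_sub]
  abel

theorem tendsto_zero_of_norm_le_mul_exp_neg {W : Type*} [SeminormedAddCommGroup W] {f : ℝ → W}
    {c σ : ℝ} (hσ : 0 < σ)
    (hf : ∀ᶠ t in atTop, ‖f t‖ ≤ c * exp (-σ * t)) : Tendsto f atTop (𝓝 0) := by
  have hexp : Tendsto (fun t : ℝ => exp (-σ * t)) atTop (𝓝 0) :=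
    tendsto_exp_atBot.comp (tendsto_id.const_mul_atTop_of_neg (neg_neg_iff_pos.mpr hσ))
  simpa using squeeze_zero_norm' hf (by simpa using hexp.const_mul c)

theorem stmt_5_general {Z U W : Type*} [NormedAddCommGroup Z] [NormedSpace ℝ Z]
    [NormedAddCommGroup U] [NormedSpace ℝ U]
    [NormedAddCommGroup W] [NormedSpace ℝ W] (q : ℕ)
    (A : Z →L[ℝ] Z) (B : U →L[ℝ] Z) (T : Z →L[ℝ] W) (L : W →L[ℝ] W)
    (C : Z →L[ℝ] (Fin q → ℝ)) (H : (Fin q → ℝ) →L[ℝ] W) (G : U →L[ℝ] W)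
    (M : (Fin q → ℝ) →L[ℝ] Z) (N : W →L[ℝ] Z)
    (hid : ∀ v : Z, M (C v) + N (T v) = v)
    (hinter : ∀ v : Z, T (A v) - L (T v) = H (C v))
    (hG : ∀ v : U, G v = T (B v))
    (F σ : ℝ) (hσ : 0 < σ)
    (hstab : ∀ e : ℝ → W, (∀ t : ℝ, HasDerivAt e (L (e t)) t) →
      ∀ t : ℝ, 0 ≤ t → ‖e t‖ ≤ F * Real.exp (-σ * t) * ‖e 0‖)
    (u : ℝ → U) (z : ℝ → Z) (w : ℝ → W)
    (hz : ∀ t : ℝ, HasDerivAt z (A (z t) + B (u t)) t)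
    (hw : ∀ t : ℝ, HasDerivAt w (L (w t) + G (u t) + H (C (z t))) t) :
    Tendsto (fun t => ‖(M (C (z t)) + N (w t)) - z t‖) atTop (nhds 0) := by
  set e : ℝ → W := fun t => w t - T (z t)
  have he : ∀ t, HasDerivAt e (L (e t)) t := fun t =>
    hasDerivAt_sub_apply_of_intertwining A L T (hz t) (by rw [hinter, ← hG]; exact hw t)
  have herr : ∀ t, M (C (z t)) + N (w t) - z t = N (e t) := fun t => calc
    _ = M (C (z t)) + N (w t) - (M (C (z t)) + N (T (z t))) := by rw [hid]
    _ = N (e t) := by simp only [e, map_sub]; abel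
  have he_lim : Tendsto e atTop (𝓝 0) :=
    tendsto_zero_of_norm_le_mul_exp_neg hσ <| (eventually_ge_atTop 0).mono fun t ht =>
      (hstab e he t ht).trans_eq (mul_right_comm _ _ _)
  simpa [herr] using ((N.continuous.tendsto 0).comp he_lim).norm

theorem stmt_5 {Z U W : Type*} [NormedAddCommGroup Z] [NormedSpace ℝ Z]
    [NormedAddCommGroup U] [NormedSpace ℝ U]
    [NormedAddCommGroup W] [NormedSpace ℝ W] (q : ℕ)
    (A : Z →L[ℝ] Z) (B : U →L[ℝ] Z) (T : Z →L[ℝ] W) (L : W →L[ℝ] W)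
    (C : Z →L[ℝ] (Fin q → ℝ)) (H : (Fin q → ℝ) →L[ℝ] W) (G : U →L[ℝ] W)
    (M : (Fin q → ℝ) →L[ℝ] Z) (N : W →L[ℝ] Z)
    (hid : ∀ v : Z, M (C v) + N (T v) = v)
    (hinter : ∀ v : Z, T (A v) - L (T v) = H (C v))
    (hG : ∀ v : U, G v = T (B v))
    (F σ : ℝ) (hF : 0 < F) (hσ : 0 < σ)
    (hstab : ∀ e : ℝ → W, (∀ t : ℝ, HasDerivAt e (L (e t)) t) →
      ∀ t : ℝ, 0 ≤ t → ‖e t‖ ≤ F * Real.exp (-σ * t) * ‖e 0‖)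
    (u : ℝ → U) (z : ℝ → Z) (w : ℝ → W)
    (hz : ∀ t : ℝ, HasDerivAt z (A (z t) + B (u t)) t)
    (hw : ∀ t : ℝ, HasDerivAt w (L (w t) + G (u t) + H (C (z t))) t) :
    Tendsto (fun t => ‖(M (C (z t)) + N (w t)) - z t‖) atTop (nhds 0) :=
  stmt_5_general q A B T L C H G M N hid hinter hG F σ hσ hstab u z w hz hw
end

section
/- If the zone-sensor symmetric distribution f is nonnegative, not a.e. zero, supported on D = [μ₀−l, μ₀+l], and cos(iπ(μ₀−α)/(β−α)) ≠ 0 with iπ·l/(β−α) < π/2, then ∫_D φ_i(x) f(x) dx ≠ 0, i.e. the sensor observes the i-th mode. -/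
open Real MeasureTheory intervalIntegral

theorem stmt_12 (α β μ₀ l : ℝ) (hαβ : α < β) (hl : 0 < l)
    (hD : α < μ₀ - l ∧ μ₀ + l < β) (i : ℕ)
    (f : ℝ → ℝ)
    (hfint : IntervalIntegrable f volume (μ₀ - l) (μ₀ + l))
    (hsym : ∀ s : ℝ, |s| ≤ l → f (μ₀ + s) = f (μ₀ - s))
    (hnonneg : ∀ x : ℝ, 0 ≤ f x)
    (hsupp : ∀ x : ℝ, x ∉ Set.Icc (μ₀ - l) (μ₀ + l) → f x = 0)
    (hne : ¬ (∀ᵐ x ∂(volume.restrict (Set.Icc (μ₀ - l) (μ₀ + l))), f x = 0))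
    (hcos : Real.cos (i * π * (μ₀ - α) / (β - α)) ≠ 0)
    (hsmall : (i : ℝ) * π * l / (β - α) < π / 2) :
    (∫ x in (μ₀ - l)..(μ₀ + l), Real.cos (i * π * (x - α) / (β - α)) * f x) ≠ 0 := by
  have hba : (0:ℝ) < β - α := by linarith
  set a := μ₀ - l with ha
  set b := μ₀ + l with hb
  set k : ℝ := i * π / (β - α) with hk
  set A : ℝ := i * π * (μ₀ - α) / (β - α) with hA
  have hab : a ≤ b := by rw [ha, hb]; linarith
  have hk0 : 0 ≤ k := div_nonneg (by positivity) hba.le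
  have hkl : k * l < π / 2 := by
    have h1 : (i:ℝ) * π * l / (β - α) = k * l := by rw [hk]; ring
    linarith [h1 ▸ hsmall]
  -- extended symmetry
  have fsym : ∀ s : ℝ, f (μ₀ + s) = f (μ₀ - s) := by
    intro s
    by_cases h : |s| ≤ l
    · exact hsym s h
    · rw [hsupp (μ₀ + s) (fun hm => h (abs_le.mpr ⟨by linarith [hm.1], by linarith [hm.2]⟩)),
        hsupp (μ₀ - s) (fun hm => h (abs_le.mpr ⟨by linarith [hm.2], by linarith [hm.1]⟩))]
  -- cos positivity on Icc
  have hcpos : ∀ x ∈ Set.Icc a b, 0 < Real.cos (k * (x - μ₀)) := by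
    intro x hx
    apply Real.cos_pos_of_mem_Ioo
    constructor
    · have : |k * (x - μ₀)| ≤ k * l := by
        rw [abs_mul, abs_of_nonneg hk0]
        exact mul_le_mul_of_nonneg_left (abs_le.mpr ⟨by linarith [hx.1], by linarith [hx.2]⟩) hk0
      nlinarith [abs_nonneg (k * (x - μ₀)), neg_abs_le (k * (x - μ₀))]
    · calc k * (x - μ₀) ≤ |k * (x - μ₀)| := le_abs_self _
        _ ≤ k * l := by
          rw [abs_mul, abs_of_nonneg hk0]
          exact mul_le_mul_of_nonneg_left (abs_le.mpr ⟨by linarith [hx.1], by linarith [hx.2]⟩) hk0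
        _ < π / 2 := hkl
  -- integrability pieces
  have hc : IntervalIntegrable (fun x => Real.cos (k * (x - μ₀)) * f x) volume a b :=
    hfint.continuousOn_mul ((Real.continuous_cos.comp (continuous_const.mul (continuous_id.sub continuous_const))).continuousOn)
  have hs : IntervalIntegrable (fun x => Real.sin (k * (x - μ₀)) * f x) volume a b :=
    hfint.continuousOn_mul ((Real.continuous_sin.comp (continuous_const.mul (continuous_id.sub continuous_const))).continuousOn)
  -- odd part vanishes
  have hI2 : (∫ x in a..b, Real.sin (k * (x - μ₀)) * f x) = 0 := by
    have hcomp := intervalIntegral.integral_comp_sub_left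
      (a := a) (b := b) (fun x => Real.sin (k * (x - μ₀)) * f x) (2 * μ₀)
    have e1 : 2 * μ₀ - b = a := by rw [ha, hb]; ring
    have e2 : 2 * μ₀ - a = b := by rw [ha, hb]; ring
    rw [e1, e2] at hcomp
    have h2 : (∫ x in a..b, Real.sin (k * (2 * μ₀ - x - μ₀)) * f (2 * μ₀ - x))
        = ∫ x in a..b, -(Real.sin (k * (x - μ₀)) * f x) := by
      apply intervalIntegral.integral_congr
      intro x _
      show Real.sin (k * (2 * μ₀ - x - μ₀)) * f (2 * μ₀ - x) = -(Real.sin (k * (x - μ₀)) * f x)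
      have : f (2 * μ₀ - x) = f x := by
        have := fsym (μ₀ - x)
        simpa [show μ₀ + (μ₀ - x) = 2*μ₀ - x by ring, show μ₀ - (μ₀ - x) = x by ring] using this
      rw [this, show k * (2 * μ₀ - x - μ₀) = -(k * (x - μ₀)) by ring, Real.sin_neg]
      ring
    rw [h2, intervalIntegral.integral_neg] at hcomp
    linarith
  -- even part nonzero
  have hI1 : (∫ x in a..b, Real.cos (k * (x - μ₀)) * f x) ≠ 0 := by
    intro h0
    set g := fun x => Real.cos (k * (x - μ₀)) * f x with hg
    have hgnn : ∀ x, 0 ≤ g x := by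
      intro x
      by_cases hx : x ∈ Set.Icc a b
      · exact mul_nonneg (hcpos x hx).le (hnonneg x)
      · simp [hg, hsupp x hx]
    have h0' : (∫ x in Set.Ioc a b, g x) = 0 := by
      rw [← intervalIntegral.integral_of_le hab]; exact h0
    have hint : IntegrableOn g (Set.Ioc a b) volume := hc.1
    have : g =ᵐ[volume.restrict (Set.Ioc a b)] 0 :=
      (MeasureTheory.integral_eq_zero_iff_of_nonneg (fun x => hgnn x) hint).mp h0'
    have hf0 : f =ᵐ[volume.restrict (Set.Ioc a b)] 0 := by
      filter_upwards [this, ae_restrict_mem measurableSet_Ioc] with x hx hmem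
      have hcne := (hcpos x (Set.Ioc_subset_Icc_self hmem)).ne'
      have : Real.cos (k * (x - μ₀)) * f x = 0 := hx
      exact (mul_eq_zero.mp this).resolve_left hcne
    rw [MeasureTheory.restrict_Ioc_eq_restrict_Icc] at hf0
    exact hne hf0
  -- assemble
  have hpt : Set.EqOn (fun x => Real.cos (i * π * (x - α) / (β - α)) * f x)
      (fun x => Real.cos A * (Real.cos (k * (x - μ₀)) * f x)
        - Real.sin A * (Real.sin (k * (x - μ₀)) * f x)) (Set.uIcc a b) := by
    intro x _
    have harg : i * π * (x - α) / (β - α) = A + k * (x - μ₀) := by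
      rw [hA, hk]; field_simp; ring
    show Real.cos (i * π * (x - α) / (β - α)) * f x = _
    rw [harg, Real.cos_add]
    ring
  rw [intervalIntegral.integral_congr hpt,
    intervalIntegral.integral_sub (hc.const_mul _) (hs.const_mul _),
    intervalIntegral.integral_const_mul, intervalIntegral.integral_const_mul, hI2, mul_zero,
    sub_zero]
  exact mul_ne_zero hcos hI1
end
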